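/- arXiv:math/0011204 — 2 statements merged into one kernel-verified Lean document; each statement's English description precedes it below -/
import Mathlib

section
/- Every finite graph G has a Gallai-Edmonds set S: every even S-component has a perfect matching, every odd S-component is factor-critical, and (if S is nonempty) S satisfies Hall's condition with surplus one in the bipartite minor ⟨G,S⟩. -/
open SimpleGraph Set

variable {V : Type*} [Fintype V] [DecidableEq V]

/-- The vertex set (in `V`) of a connected component of the graph induced on `B`. -/
def compSupp (G : SimpleGraph V) (B : Set V)
    (c : (G.induce B).ConnectedComponent) : Set V :=
  Subtype.val '' c.supp

/-- `A` is (the vertex set of) a connected component of `G` restricted to `B`. -/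
def IsCompOf (G : SimpleGraph V) (B : Set V) (A : Set V) : Prop :=
  ∃ c : (G.induce B).ConnectedComponent, A = compSupp G B c

/-- The number of odd connected components of `G` restricted to `B`. -/
noncomputable def oddComps (G : SimpleGraph V) (B : Set V) : ℕ :=
  Set.ncard {c : (G.induce B).ConnectedComponent | Odd (compSupp G B c).ncard}

/-- The deficiency `df(S) = od(S) - |S|`. -/
noncomputable def df (G : SimpleGraph V) (S : Set V) : ℤ :=
  (oddComps G Sᶜ : ℤ) - S.ncard

/-- The induced subgraph on `A` has a perfect matching. -/
def HasPM (G : SimpleGraph V) (A : Set V) : Prop :=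
  ∃ M : Subgraph (G.induce A), M.IsPerfectMatching

/-- `Df(S)`: total number of vertices in components of `G - S` with no perfect matching. -/
noncomputable def Df (G : SimpleGraph V) (S : Set V) : ℕ :=
  Set.ncard (⋃ c ∈ {c : (G.induce Sᶜ).ConnectedComponent |
    ¬ HasPM G (compSupp G Sᶜ c)}, compSupp G Sᶜ c)

/-- The set of `M`-exposed vertices. -/
def exposed (G : SimpleGraph V) (M : Subgraph G) : Set V :=
  {v | v ∉ M.support}

/-- `A` induces a factor-critical graph. -/
def FactorCritical (G : SimpleGraph V) (A : Set V) : Prop :=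
  ∀ v ∈ A, HasPM G (A \ {v})

/-- The neighborhood of `T ⊆ S` in the bipartite minor `⟨G,S⟩`: the odd
`S`-components adjacent to some vertex of `T`. -/
def minorNbhd (G : SimpleGraph V) (S T : Set V) :
    Set (G.induce Sᶜ).ConnectedComponent :=
  {c | Odd (compSupp G Sᶜ c).ncard ∧ ∃ u ∈ T, ∃ w ∈ compSupp G Sᶜ c, G.Adj u w}

/-- `S` is a Gallai-Edmonds set of `G`. -/
def GallaiEdmonds (G : SimpleGraph V) (S : Set V) : Prop :=
  (∀ c : (G.induce Sᶜ).ConnectedComponent,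
      Even (compSupp G Sᶜ c).ncard → HasPM G (compSupp G Sᶜ c)) ∧
  (∀ c : (G.induce Sᶜ).ConnectedComponent,
      Odd (compSupp G Sᶜ c).ncard → FactorCritical G (compSupp G Sᶜ c)) ∧
  (∀ T ⊆ S, T.Nonempty → T.ncard + 1 ≤ (minorNbhd G S T).ncard)

/-- `w` and `w'` lie in the same `S`-component. -/
def SameComp (G : SimpleGraph V) (S : Set V) (w w' : V) : Prop :=
  ∃ c : (G.induce Sᶜ).ConnectedComponent,
    w ∈ compSupp G Sᶜ c ∧ w' ∈ compSupp G Sᶜ c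

/-- `M` is a maximum matching of `G`. -/
def IsMaximumMatching (G : SimpleGraph V) (M : Subgraph G) : Prop :=
  M.IsMatching ∧ ∀ M' : Subgraph G, M'.IsMatching →
    M'.edgeSet.ncard ≤ M.edgeSet.ncard

/-!
Choose `S` maximising the deficiency `df G S`, and among the maximisers one of maximum size.
Then every `S`-component is odd and, by Tutte's theorem, factor-critical: adding to `S` a vertex
of an even component, or a vertex `v` of an odd component `A` together with a Tutte violator of
`A - v`, would give a larger maximiser, since `df` has constant parity.

Among the maximisers whose even components have perfect matchings and whose odd components are
factor-critical, take one, `S`, of minimum size. Maximality of `df` gives `|N(T)| ≥ |T|` for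
`T ⊆ S`. If `|N(T)| = |T|` for some nonempty `T`, Hall's theorem matches `T` onto `N(T)`; each
component of `G - (S \ T)` meeting `T` is then covered by the vertices of `T` with their matched
odd components and by even components, so it has a perfect matching, and `S \ T` contradicts
minimality.
-/

set_option linter.unusedSectionVars false

section Components

variable {G : SimpleGraph V} {B A A' : Set V}

lemma mem_of_reachable_of_closed (hA : ∀ x ∈ A, ∀ y ∈ B, G.Adj x y → y ∈ A) {u v : B}
    (h : (G.induce B).Reachable u v) (hu : (u : V) ∈ A) : (v : V) ∈ A := by
  obtain ⟨w⟩ := h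
  induction w with
  | nil => exact hu
  | cons hadj _ ih => exact ih (hA _ hu _ (Subtype.prop _) hadj)

def induceInduceHom (G : SimpleGraph V) (s : Set B) :
    (G.induce B).induce s →g G.induce (Subtype.val '' s) where
  toFun v := ⟨v.1.1, v.1, v.2, rfl⟩
  map_rel' h := h

lemma compSupp_injective : Function.Injective (compSupp G B) :=
  fun _ _ h => ConnectedComponent.supp_injective (Subtype.val_injective.image_injective h)

lemma isCompOf_iff : IsCompOf G B A ↔
    A ⊆ B ∧ (G.induce A).Connected ∧ ∀ x ∈ A, ∀ y ∈ B, G.Adj x y → y ∈ A := by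
  constructor
  · rintro ⟨c, rfl⟩
    refine ⟨by rintro _ ⟨x, -, rfl⟩; exact x.2, ?_, ?_⟩
    · have hc := c.connected_toSimpleGraph
      refine @Connected.mk _ _ (fun ⟨_, x, hx, hxv⟩ ⟨_, y, hy, hyv⟩ => ?_)
        (hc.nonempty.map (induceInduceHom G c.supp))
      subst hxv hyv
      exact (c.reachable_toSimpleGraph hx hy).map (induceInduceHom G c.supp)
    · rintro _ ⟨x, hx, rfl⟩ y hy hadj
      exact ⟨⟨y, hy⟩, (c.mem_supp_congr_adj (v := x) (w := ⟨y, hy⟩) hadj).mp hx, rfl⟩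
  · rintro ⟨hAB, hconn, hclosed⟩
    obtain ⟨x, hx⟩ := hconn.nonempty.some
    refine ⟨(G.induce B).connectedComponentMk ⟨x, hAB hx⟩, Set.Subset.antisymm ?_ ?_⟩
    · intro y hy
      refine ⟨⟨y, hAB hy⟩, ConnectedComponent.sound ?_, rfl⟩
      exact (hconn.preconnected ⟨y, hy⟩ ⟨x, hx⟩).map (G.induceHomOfLE hAB).toHom
    · rintro _ ⟨y, hy, rfl⟩
      exact mem_of_reachable_of_closed hclosed (ConnectedComponent.exact hy).symm hx

lemma IsCompOf.subset (h : IsCompOf G B A) : A ⊆ B := (isCompOf_iff.mp h).1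

lemma IsCompOf.connected (h : IsCompOf G B A) : (G.induce A).Connected := (isCompOf_iff.mp h).2.1

lemma IsCompOf.nonempty (h : IsCompOf G B A) : A.Nonempty :=
  let ⟨x⟩ := h.connected.nonempty; ⟨x, x.2⟩

lemma IsCompOf.closed (h : IsCompOf G B A) : ∀ x ∈ A, ∀ y ∈ B, G.Adj x y → y ∈ A :=
  (isCompOf_iff.mp h).2.2

lemma IsCompOf.mono_down {B' : Set V} (h : IsCompOf G B A) (hAB' : A ⊆ B') (hB'B : B' ⊆ B) :
    IsCompOf G B' A :=
  isCompOf_iff.mpr ⟨hAB', h.connected, fun x hx y hy => h.closed x hx y (hB'B hy)⟩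

lemma IsCompOf.mono_up {B' : Set V} (h : IsCompOf G B A) (hBB' : B ⊆ B')
    (hstay : ∀ x ∈ A, ∀ y ∈ B', G.Adj x y → y ∈ B) : IsCompOf G B' A :=
  isCompOf_iff.mpr ⟨h.subset.trans hBB', h.connected,
    fun x hx y hy hadj => h.closed x hx y (hstay x hx y hy hadj) hadj⟩

lemma IsCompOf.subset_of_connected (h : IsCompOf G B A) (hA' : (G.induce A').Connected)
    (hA'B : A' ⊆ B) (hint : (A' ∩ A).Nonempty) : A' ⊆ A := by
  obtain ⟨x, hxA', hxA⟩ := hint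
  intro y hy
  exact mem_of_reachable_of_closed (u := ⟨x, hA'B hxA'⟩) (v := ⟨y, hA'B hy⟩) h.closed
    ((hA'.preconnected ⟨x, hxA'⟩ ⟨y, hy⟩).map (G.induceHomOfLE hA'B).toHom) hxA

lemma IsCompOf.eq_of_not_disjoint (h : IsCompOf G B A) (h' : IsCompOf G B A')
    (hint : ¬Disjoint A A') : A = A' := by
  rw [Set.not_disjoint_iff_nonempty_inter] at hint
  exact (h'.subset_of_connected h.connected h.subset hint).antisymm
    (h.subset_of_connected h'.connected h'.subset (Set.inter_comm A A' ▸ hint))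

lemma IsCompOf.disjoint_of_ne (h : IsCompOf G B A) (h' : IsCompOf G B A') (hne : A ≠ A') :
    Disjoint A A' := by
  by_contra hint
  exact hne (h.eq_of_not_disjoint h' hint)

lemma IsCompOf.exists_adj_of_ssubset {B' K : Set V} (h : IsCompOf G B A) (hK : IsCompOf G B' K)
    (hBB' : B ⊆ B') (hAK : A ⊂ K) : ∃ x ∈ A, ∃ y ∈ B' \ B, G.Adj x y := by
  by_contra! hno
  have hA' : IsCompOf G B' A :=
    h.mono_up hBB' fun x hx y hy hadj => by_contra fun hyB => hno x hx y ⟨hy, hyB⟩ hadj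
  obtain ⟨x, hx⟩ := h.nonempty
  exact hAK.ne (hA'.eq_of_not_disjoint hK (Set.not_disjoint_iff.mpr ⟨x, hx, hAK.subset hx⟩))

lemma exists_isCompOf_mem {x : V} (hx : x ∈ B) : ∃ A, IsCompOf G B A ∧ x ∈ A :=
  ⟨_, ⟨(G.induce B).connectedComponentMk ⟨x, hx⟩, rfl⟩, ⟨x, hx⟩, rfl, rfl⟩

end Components

section OddComponents

variable {G : SimpleGraph V} {B A X S : Set V}

def oddCompSets (G : SimpleGraph V) (B : Set V) : Set (Set V) :=
  {A | IsCompOf G B A ∧ Odd A.ncard}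

lemma oddComps_eq_ncard_oddCompSets : oddComps G B = (oddCompSets G B).ncard := by
  rw [oddComps, ← Set.ncard_image_of_injective _ compSupp_injective]
  congr 1
  ext A
  constructor
  · rintro ⟨c, hc, rfl⟩
    exact ⟨⟨c, rfl⟩, hc⟩
  · rintro ⟨⟨c, rfl⟩, hodd⟩
    exact ⟨c, hodd, rfl⟩

lemma oddComps_eq_ncard_oddComponents : oddComps G B = (G.induce B).oddComponents.ncard := by
  have hsupp (c : (G.induce B).ConnectedComponent) : (compSupp G B c).ncard = c.supp.ncard :=
    Set.ncard_image_of_injective _ Subtype.val_injective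
  simp only [oddComps, hsupp]

lemma odd_oddComps_iff : Odd (oddComps G B) ↔ Odd B.ncard := by
  rw [oddComps_eq_ncard_oddComponents, odd_ncard_oddComponents, Nat.card_coe_set_eq]

lemma df_emod_two (G : SimpleGraph V) (S : Set V) : df G S % 2 = Fintype.card V % 2 := by
  have hodd := (odd_oddComps_iff (G := G) (B := Sᶜ))
  have hcard : S.ncard + Sᶜ.ncard = Fintype.card V := by
    rw [← Nat.card_eq_fintype_card]
    exact Set.ncard_add_ncard_compl S
  simp only [Nat.odd_iff] at hodd
  rw [df]
  omega

lemma ncard_oddCompSets_diff_add_oddComps_le (hA : IsCompOf G B A) (hX : X ⊆ A) :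
    (oddCompSets G B \ {A}).ncard + oddComps G (A \ X) ≤ oddComps G (B \ X) := by
  have houter : oddCompSets G B \ {A} ⊆ oddCompSets G (B \ X) := by
    rintro A' ⟨⟨hA', hodd⟩, hne⟩
    refine ⟨hA'.mono_down (fun x hx => ⟨hA'.subset hx, fun hxX => ?_⟩) Set.sdiff_subset, hodd⟩
    exact Set.disjoint_left.mp (hA'.disjoint_of_ne hA hne) hx (hX hxX)
  have hinner : oddCompSets G (A \ X) ⊆ oddCompSets G (B \ X) := by
    rintro D ⟨hD, hodd⟩
    refine ⟨hD.mono_up (Set.sdiff_subset_sdiff_left hA.subset) ?_, hodd⟩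
    intro x hx y hy hadj
    exact ⟨hA.closed x (hD.subset hx).1 y hy.1 hadj, hy.2⟩
  have hdisj : Disjoint (oddCompSets G B \ {A}) (oddCompSets G (A \ X)) := by
    rw [Set.disjoint_left]
    rintro A' ⟨⟨hA', -⟩, hne⟩ ⟨hD, -⟩
    obtain ⟨x, hx⟩ := hD.nonempty
    exact hne (hA'.eq_of_not_disjoint hA
      (Set.not_disjoint_iff.mpr ⟨x, hx, (hD.subset hx).1⟩))
  rw [oddComps_eq_ncard_oddCompSets, oddComps_eq_ncard_oddCompSets,
    ← Set.ncard_union_eq hdisj]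
  exact Set.ncard_le_ncard (Set.union_subset houter hinner)

lemma df_union (hSX : Disjoint S X) :
    df G (S ∪ X) = oddComps G (Sᶜ \ X) - S.ncard - X.ncard := by
  rw [df, Set.compl_union, ← Set.sdiff_eq, Set.ncard_union_eq hSX]
  push_cast
  ring

lemma IsCompOf.disjoint_compl_of_subset (hA : IsCompOf G Sᶜ A) (hX : X ⊆ A) : Disjoint S X :=
  Set.disjoint_right.mpr fun _ hx => hA.subset (hX hx)

lemma df_add_oddComps_le (hA : IsCompOf G Sᶜ A) (hX : X ⊆ A) :
    df G S + oddComps G (A \ X) ≤ df G (S ∪ X) + X.ncard + 1 := by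
  have hle := ncard_oddCompSets_diff_add_oddComps_le hA hX
  have hdiff := Set.ncard_le_ncard_sdiff_add_ncard (oddCompSets G Sᶜ) {A}
  rw [Set.ncard_singleton] at hdiff
  rw [df_union (hA.disjoint_compl_of_subset hX), df, oddComps_eq_ncard_oddCompSets (B := Sᶜ)]
  omega

lemma df_add_oddComps_le_of_even (hA : IsCompOf G Sᶜ A) (hEven : Even A.ncard) (hX : X ⊆ A) :
    df G S + oddComps G (A \ X) ≤ df G (S ∪ X) + X.ncard := by
  have hle := ncard_oddCompSets_diff_add_oddComps_le hA hX
  have hnotMem : A ∉ oddCompSets G Sᶜ := fun h => Nat.not_odd_iff_even.mpr hEven h.2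
  rw [Set.sdiff_singleton_eq_self hnotMem] at hle
  rw [df_union (hA.disjoint_compl_of_subset hX), df, oddComps_eq_ncard_oddCompSets (B := Sᶜ)]
  omega

end OddComponents

section Matchings

variable {G : SimpleGraph V} {A B K : Set V}

lemma hasPM_iff_exists_isMatching : HasPM G A ↔ ∃ M : Subgraph G, M.IsMatching ∧ M.verts = A := by
  constructor
  · rintro ⟨M, hM⟩
    refine ⟨M.map (Embedding.induce A).toHom, hM.1.map _ Subtype.val_injective, ?_⟩
    rw [Subgraph.map_verts, hM.2.verts_eq_univ, Set.image_univ]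
    exact Subtype.range_val
  · rintro ⟨M, hM, rfl⟩
    refine ⟨{ verts := Set.univ
              Adj := fun a b => M.Adj a b
              adj_sub := M.adj_sub
              edge_vert := fun _ => trivial
              symm := ⟨fun _ _ h => h.symm⟩ }, fun v _ => ?_, fun _ => trivial⟩
    obtain ⟨w, hw, huniq⟩ := hM v.2
    exact ⟨⟨w, M.edge_vert hw.symm⟩, hw, fun w' hw' => Subtype.ext (huniq w' hw')⟩

lemma HasPM.even_ncard (h : HasPM G A) : Even A.ncard := by
  obtain ⟨M, hM, rfl⟩ := hasPM_iff_exists_isMatching.mp h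
  have := Fintype.ofFinite M.verts
  rw [Set.ncard_eq_toFinset_card']
  exact hM.even_card

lemma hasPM_iUnion {ι : Type*} {f : ι → Set V} (hdisj : Pairwise (Function.onFun Disjoint f))
    (h : ∀ i, HasPM G (f i)) : HasPM G (⋃ i, f i) := by
  choose M hM hMv using fun i => hasPM_iff_exists_isMatching.mp (h i)
  refine hasPM_iff_exists_isMatching.mpr ⟨⨆ i, M i, Subgraph.IsMatching.iSup hM fun i j hij => ?_, ?_⟩
  · dsimp only
    rw [(hM i).support_eq_verts, (hM j).support_eq_verts, hMv, hMv]
    exact hdisj hij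
  · simp only [Subgraph.verts_iSup, hMv]

lemma hasPM_union (hd : Disjoint A B) (hA : HasPM G A) (hB : HasPM G B) : HasPM G (A ∪ B) := by
  obtain ⟨M₁, hM₁, rfl⟩ := hasPM_iff_exists_isMatching.mp hA
  obtain ⟨M₂, hM₂, rfl⟩ := hasPM_iff_exists_isMatching.mp hB
  refine hasPM_iff_exists_isMatching.mpr ⟨M₁ ⊔ M₂, hM₁.sup hM₂ ?_, Subgraph.verts_sup _ _⟩
  rwa [hM₁.support_eq_verts, hM₂.support_eq_verts]

lemma hasPM_insert_of_factorCritical {t w : V} (hD : FactorCritical G A) (hw : w ∈ A)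
    (ht : t ∉ A) (hadj : G.Adj t w) : HasPM G (insert t A) := by
  have hpair : HasPM G {t, w} :=
    hasPM_iff_exists_isMatching.mpr ⟨G.subgraphOfAdj hadj, Subgraph.IsMatching.subgraphOfAdj hadj, by simp⟩
  have hdisj : Disjoint {t, w} (A \ {w}) := by
    simp [Set.disjoint_insert_left, ht]
  convert hasPM_union hdisj hpair (hD w hw) using 1
  ext x
  by_cases hxw : x = w <;> simp [hxw, hw]

lemma HasPM.of_isCompOf (h : HasPM G A) (hK : IsCompOf G B K) (hAB : A ⊆ B) (hKA : K ⊆ A) :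
    HasPM G K := by
  obtain ⟨M, hM, rfl⟩ := hasPM_iff_exists_isMatching.mp h
  refine hasPM_iff_exists_isMatching.mpr ⟨M.induce K, fun v hv => ?_, rfl⟩
  obtain ⟨w, hw, huniq⟩ := hM (hKA hv)
  have hwK : w ∈ K := hK.closed v hv w (hAB (M.edge_vert hw.symm)) (M.adj_sub hw)
  exact ⟨w, ⟨hv, hwK, hw⟩, fun w' hw' => huniq w' hw'.2.2⟩

end Matchings

lemma SimpleGraph.Iso.ncard_oddComponents_eq {W W' : Type*} {H : SimpleGraph W}
    {H' : SimpleGraph W'} (φ : H ≃g H') : H.oddComponents.ncard = H'.oddComponents.ncard := by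
  rw [← Set.ncard_image_of_injective _ φ.connectedComponentEquiv.injective]
  congr 1
  ext c
  obtain ⟨c, rfl⟩ := φ.connectedComponentEquiv.surjective c
  rw [φ.connectedComponentEquiv.injective.mem_set_image]
  simp only [Set.mem_ofPred_eq, ← Nat.card_coe_set_eq,
    Nat.card_congr (ConnectedComponent.isoEquivSupp φ c)]

section Tutte

variable {G : SimpleGraph V} {A : Set V}

lemma ncard_oddComponents_deleteVerts_induce (u : Set A) :
    ((⊤ : (G.induce A).Subgraph).deleteVerts u).coe.oddComponents.ncard =
      oddComps G (A \ Subtype.val '' u) := by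
  let φ : ((⊤ : (G.induce A).Subgraph).deleteVerts u).coe ≃g G.induce (A \ Subtype.val '' u) :=
    { toFun := fun v => ⟨v.1.1, v.1.2, fun ⟨w, hw, hwv⟩ => v.2.2 (Subtype.ext hwv ▸ hw)⟩
      invFun := fun v => ⟨⟨v.1, v.2.1⟩, trivial, fun hv => v.2.2 ⟨_, hv, rfl⟩⟩
      left_inv := fun _ => rfl
      right_inv := fun _ => rfl
      map_rel_iff' := by simp +contextual }
  rw [φ.ncard_oddComponents_eq, oddComps_eq_ncard_oddComponents]

lemma hasPM_of_forall_oddComps_le (h : ∀ T ⊆ A, oddComps G (A \ T) ≤ T.ncard) : HasPM G A := by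
  refine tutte.mpr fun u hu => ?_
  rw [IsTutteViolator, ncard_oddComponents_deleteVerts_induce,
    ← Set.ncard_image_of_injective u Subtype.val_injective] at hu
  exact (h _ (Subtype.coe_image_subset A u)).not_gt hu

end Tutte

section Deficiency

variable {G : SimpleGraph V} {S A T : Set V}

def HasGoodComponents (G : SimpleGraph V) (S : Set V) : Prop :=
  (∀ A, IsCompOf G Sᶜ A → Even A.ncard → HasPM G A) ∧
    (∀ A, IsCompOf G Sᶜ A → Odd A.ncard → FactorCritical G A)

lemma odd_ncard_of_isCompOf (hlarge : ∀ S', df G S ≤ df G S' → S'.ncard ≤ S.ncard)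
    (hA : IsCompOf G Sᶜ A) : Odd A.ncard := by
  by_contra hodd
  rw [Nat.not_odd_iff_even] at hodd
  obtain ⟨v, hv⟩ := hA.nonempty
  have hvA : {v} ⊆ A := Set.singleton_subset_iff.mpr hv
  have hrest : 1 ≤ oddComps G (A \ {v}) := by
    refine Odd.pos (odd_oddComps_iff.mpr ?_)
    rw [Set.ncard_sdiff_singleton_of_mem hv]
    exact Nat.Even.sub_odd hA.nonempty.ncard_pos hodd odd_one
  have hle := df_add_oddComps_le_of_even hA hodd hvA
  rw [Set.ncard_singleton] at hle
  have := hlarge (S ∪ {v}) (by push_cast at hle; omega)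
  rw [Set.ncard_union_eq (hA.disjoint_compl_of_subset hvA), Set.ncard_singleton] at this
  omega

lemma factorCritical_of_isCompOf (hlarge : ∀ S', df G S ≤ df G S' → S'.ncard ≤ S.ncard)
    (hA : IsCompOf G Sᶜ A) : FactorCritical G A := by
  intro v hv
  refine hasPM_of_forall_oddComps_le fun T hT => ?_
  by_contra! hlt
  have hvT : v ∉ T := fun h => (hT h).2 rfl
  have hX : insert v T ⊆ A := Set.insert_subset hv fun x hx => (hT hx).1
  have hle := df_add_oddComps_le hA hX
  rw [Set.sdiff_sdiff, ← Set.insert_eq] at hlt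
  rw [Set.ncard_insert_of_notMem hvT] at hle
  have hpar := (df_emod_two G S).trans (df_emod_two G (S ∪ insert v T)).symm
  have := hlarge (S ∪ insert v T) (by push_cast at hle; omega)
  rw [Set.ncard_union_eq (hA.disjoint_compl_of_subset hX)] at this
  have := (Set.insert_nonempty v T).ncard_pos
  omega

lemma exists_df_max_hasGoodComponents (G : SimpleGraph V) :
    ∃ S, (∀ S', df G S' ≤ df G S) ∧ HasGoodComponents G S := by
  obtain ⟨S₀, -, hS₀⟩ := Set.exists_max_image Set.univ (df G) (Set.toFinite _) Set.univ_nonempty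
  obtain ⟨S, hS, hSmax⟩ := Set.exists_max_image {S | ∀ S', df G S' ≤ df G S} Set.ncard
    (Set.toFinite _) ⟨S₀, fun S' => hS₀ S' trivial⟩
  have hlarge : ∀ S', df G S ≤ df G S' → S'.ncard ≤ S.ncard :=
    fun S' h => hSmax S' fun S'' => (hS S'').trans h
  exact ⟨S, hS, fun A hA hEven => absurd (odd_ncard_of_isCompOf hlarge hA)
    (Nat.not_odd_iff_even.mpr hEven), fun A hA _ => factorCritical_of_isCompOf hlarge hA⟩

end Deficiency

section HallSurplus

variable {G : SimpleGraph V} {S T : Set V}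

def oddNbhd (G : SimpleGraph V) (S T : Set V) : Set (Set V) :=
  {A | IsCompOf G Sᶜ A ∧ Odd A.ncard ∧ ∃ u ∈ T, ∃ w ∈ A, G.Adj u w}

lemma ncard_minorNbhd : (minorNbhd G S T).ncard = (oddNbhd G S T).ncard := by
  rw [← Set.ncard_image_of_injective _ compSupp_injective]
  congr 1
  ext A
  constructor
  · rintro ⟨c, ⟨hodd, hadj⟩, rfl⟩
    exact ⟨⟨c, rfl⟩, hodd, hadj⟩
  · rintro ⟨⟨c, rfl⟩, hodd, hadj⟩
    exact ⟨c, ⟨hodd, hadj⟩, rfl⟩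

lemma df_add_ncard_le (hTS : T ⊆ S) :
    df G S + T.ncard ≤ df G (S \ T) + (oddNbhd G S T).ncard := by
  have hsub : oddCompSets G Sᶜ \ oddNbhd G S T ⊆ oddCompSets G (S \ T)ᶜ := by
    rintro A ⟨⟨hA, hodd⟩, hnadj⟩
    refine ⟨hA.mono_up (Set.compl_subset_compl.mpr Set.sdiff_subset) ?_, hodd⟩
    intro x hx y hy hadj hyS
    exact hnadj ⟨hA, hodd, y, by_contra fun hyT => hy ⟨hyS, hyT⟩, x, hx, hadj.symm⟩
  have hle := (Set.ncard_le_ncard_sdiff_add_ncard (oddCompSets G Sᶜ) (oddNbhd G S T)).trans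
    (Nat.add_le_add_right (Set.ncard_le_ncard hsub) _)
  rw [df, df, oddComps_eq_ncard_oddCompSets, oddComps_eq_ncard_oddCompSets,
    Set.ncard_sdiff hTS]
  have := Set.ncard_le_ncard hTS
  omega

lemma ncard_le_ncard_oddNbhd (hmax : ∀ S', df G S' ≤ df G S) (hTS : T ⊆ S) :
    T.ncard ≤ (oddNbhd G S T).ncard := by
  have := df_add_ncard_le (G := G) hTS
  have := hmax (S \ T)
  omega

lemma exists_injective_oddNbhd (hmax : ∀ S', df G S' ≤ df G S) (hTS : T ⊆ S) :
    ∃ f : T → Set V, Function.Injective f ∧ ∀ t, f t ∈ oddNbhd G S {t.1} := by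
  classical
  refine (Fintype.all_card_le_filter_rel_iff_exists_injective
    (fun (t : T) A => A ∈ oddNbhd G S {t.1})).mp fun T' => ?_
  have hT'S : Subtype.val '' (T' : Set T) ⊆ S := fun _ ⟨t, _, ht⟩ => ht ▸ hTS t.2
  have hnbhd : ((Finset.univ.filter fun A => ∃ t ∈ T', A ∈ oddNbhd G S {t.1}) : Set (Set V)) =
      oddNbhd G S (Subtype.val '' (T' : Set T)) := by
    ext A
    simp only [Finset.coe_filter, Finset.mem_univ, true_and, Set.mem_ofPred_eq, oddNbhd,
      Set.mem_singleton_iff, Set.mem_image, Finset.mem_coe]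
    constructor
    · rintro ⟨t, ht, hA, hodd, _, rfl, hadj⟩
      exact ⟨hA, hodd, t, ⟨t, ht, rfl⟩, hadj⟩
    · rintro ⟨hA, hodd, _, ⟨t, ht, rfl⟩, hadj⟩
      exact ⟨t, ht, hA, hodd, t, rfl, hadj⟩
  have h := ncard_le_ncard_oddNbhd hmax hT'S
  rwa [← hnbhd, Set.ncard_coe_finset, Set.ncard_image_of_injective _ Subtype.val_injective,
    Set.ncard_coe_finset] at h

end HallSurplus

section Merging

variable {G : SimpleGraph V} {S T K : Set V} {f : T → Set V}

def matchedRegion (G : SimpleGraph V) (S : Set V) {T : Set V} (f : T → Set V) : Set V :=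
  (⋃ t, insert t.1 (f t)) ∪ ⋃₀ {D | IsCompOf G Sᶜ D ∧ Even D.ncard}

lemma hasPM_matchedRegion (hgood : HasGoodComponents G S) (hTS : T ⊆ S)
    (hf : Function.Injective f) (hfN : ∀ t, f t ∈ oddNbhd G S {t.1}) :
    HasPM G (matchedRegion G S f) := by
  have hfcomp (t : T) : IsCompOf G Sᶜ (f t) := (hfN t).1
  have hnotMem (t t' : T) : t.1 ∉ f t' := fun h => (hfcomp t').subset h (hTS t.2)
  have hwit (t : T) : ∃ w ∈ f t, G.Adj t w := by
    obtain ⟨_, rfl, hw⟩ := (hfN t).2.2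
    exact hw
  choose w hw hadj using hwit
  have hmatched : HasPM G (⋃ t, insert t.1 (f t)) := by
    refine hasPM_iUnion (fun t t' hne => ?_) fun t =>
      hasPM_insert_of_factorCritical (hgood.2 _ (hfcomp t) (hfN t).2.1) (hw t) (hnotMem t t)
        (hadj t)
    simp only [Function.onFun, Set.disjoint_insert_left, Set.disjoint_insert_right,
      Set.mem_insert_iff, not_or]
    exact ⟨⟨Subtype.coe_ne_coe.mpr hne.symm, hnotMem t' t⟩, hnotMem t t',
      (hfcomp t).disjoint_of_ne (hfcomp t') (hf.ne hne)⟩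
  have heven : HasPM G (⋃₀ {D | IsCompOf G Sᶜ D ∧ Even D.ncard}) := by
    rw [Set.sUnion_eq_iUnion]
    exact hasPM_iUnion (fun D D' hne => D.2.1.disjoint_of_ne D'.2.1 (Subtype.coe_ne_coe.mpr hne))
      fun D => hgood.1 D D.2.1 D.2.2
  refine hasPM_union ?_ hmatched heven
  simp only [Set.disjoint_iUnion_left, Set.disjoint_sUnion_right, Set.disjoint_insert_left]
  refine fun D hD t => ⟨fun h => hD.1.subset h (hTS t.2), (hfcomp t).disjoint_of_ne hD.1 ?_⟩
  exact fun h => Nat.not_even_iff_odd.mpr (hfN t).2.1 (h ▸ hD.2)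

lemma matchedRegion_subset (hfN : ∀ t, f t ∈ oddNbhd G S {t.1}) :
    matchedRegion G S f ⊆ (S \ T)ᶜ := by
  have hScomp : Sᶜ ⊆ (S \ T)ᶜ := Set.compl_subset_compl.mpr Set.sdiff_subset
  exact Set.union_subset
    (Set.iUnion_subset fun t => Set.insert_subset (fun h => h.2 t.2)
      ((hfN t).1.subset.trans hScomp))
    (Set.sUnion_subset fun D hD => hD.1.subset.trans hScomp)

lemma subset_matchedRegion (hTS : T ⊆ S) (hsurj : oddNbhd G S T ⊆ Set.range f)
    (hK : IsCompOf G (S \ T)ᶜ K) (hKT : (K ∩ T).Nonempty) : K ⊆ matchedRegion G S f := by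
  have hScomp : Sᶜ ⊆ (S \ T)ᶜ := Set.compl_subset_compl.mpr Set.sdiff_subset
  intro x hxK
  by_cases hxT : x ∈ T
  · exact Or.inl (Set.mem_iUnion.mpr ⟨⟨x, hxT⟩, Set.mem_insert _ _⟩)
  have hxS : x ∈ Sᶜ := fun hxS => hK.subset hxK ⟨hxS, hxT⟩
  obtain ⟨D, hD, hxD⟩ := exists_isCompOf_mem hxS
  rcases Nat.even_or_odd D.ncard with hEven | hodd
  · exact Or.inr ⟨D, ⟨hD, hEven⟩, hxD⟩
  -- `D` is not all of `K`, which also meets `T`, so an edge leaves `D` towards `T`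
  obtain ⟨t₀, ht₀K, ht₀T⟩ := hKT
  have hDK : D ⊂ K := by
    refine ⟨hK.subset_of_connected hD.connected (hD.subset.trans hScomp) ⟨x, hxD, hxK⟩,
      fun h => hD.subset (h ht₀K) (hTS ht₀T)⟩
  obtain ⟨a, ha, y, ⟨hyST, hyS⟩, hay⟩ := hD.exists_adj_of_ssubset hK hScomp hDK
  have hyT : y ∈ T := by_contra fun hyT => hyST ⟨not_not.mp hyS, hyT⟩
  obtain ⟨t, rfl⟩ := hsurj ⟨hD, hodd, y, hyT, a, ha, hay.symm⟩
  exact Or.inl (Set.mem_iUnion.mpr ⟨t, Set.mem_insert_of_mem _ hxD⟩)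

lemma hasGoodComponents_sdiff (hgood : HasGoodComponents G S) (hTS : T ⊆ S)
    (hf : Function.Injective f) (hfN : ∀ t, f t ∈ oddNbhd G S {t.1})
    (hsurj : oddNbhd G S T ⊆ Set.range f) : HasGoodComponents G (S \ T) := by
  have hold (K) (hK : IsCompOf G (S \ T)ᶜ K) (hKT : ¬(K ∩ T).Nonempty) : IsCompOf G Sᶜ K :=
    hK.mono_down (fun x hx hxS => hK.subset hx ⟨hxS, fun hxT => hKT ⟨x, hx, hxT⟩⟩)
      (Set.compl_subset_compl.mpr Set.sdiff_subset)
  have hnew {K} (hK : IsCompOf G (S \ T)ᶜ K) (hKT : (K ∩ T).Nonempty) : HasPM G K :=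
    (hasPM_matchedRegion hgood hTS hf hfN).of_isCompOf hK (matchedRegion_subset hfN)
      (subset_matchedRegion hTS hsurj hK hKT)
  refine ⟨fun K hK hEven => ?_, fun K hK hodd => ?_⟩
  · by_cases hKT : (K ∩ T).Nonempty
    · exact hnew hK hKT
    · exact hgood.1 K (hold K hK hKT) hEven
  · by_cases hKT : (K ∩ T).Nonempty
    · exact absurd (hnew hK hKT).even_ncard (Nat.not_even_iff_odd.mpr hodd)
    · exact hgood.2 K (hold K hK hKT) hodd

lemma ncard_add_one_le_ncard_oddNbhd (hmax : ∀ S', df G S' ≤ df G S)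
    (hgood : HasGoodComponents G S)
    (hmin : ∀ S', (∀ S'', df G S'' ≤ df G S') → HasGoodComponents G S' → S.ncard ≤ S'.ncard)
    (hTS : T ⊆ S) (hT : T.Nonempty) : T.ncard + 1 ≤ (oddNbhd G S T).ncard := by
  by_contra! hlt
  have hN : (oddNbhd G S T).ncard = T.ncard :=
    le_antisymm (Nat.lt_succ_iff.mp hlt) (ncard_le_ncard_oddNbhd hmax hTS)
  obtain ⟨f, hf, hfN⟩ := exists_injective_oddNbhd hmax hTS
  have hrange : Set.range f = oddNbhd G S T := by
    refine Set.eq_of_subset_of_ncard_le ?_ ?_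
    · rintro _ ⟨t, rfl⟩
      obtain ⟨hA, hodd, u, rfl, hadj⟩ := hfN t
      exact ⟨hA, hodd, t, t.2, hadj⟩
    · rw [Set.ncard_range_of_injective hf, hN, Nat.card_coe_set_eq]
  have hmax' (S' : Set V) : df G S' ≤ df G (S \ T) := by
    have := df_add_ncard_le (G := G) hTS
    have := hmax S'
    omega
  have := hmin _ hmax' (hasGoodComponents_sdiff hgood hTS hf hfN hrange.symm.subset)
  have := Set.ncard_lt_ncard (hTS.sdiff_ssubset_of_nonempty hT)
  omega

end Merging

/-- Every finite graph has a Gallai-Edmonds set. -/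
theorem stmt_7 (G : SimpleGraph V) : ∃ S : Set V, GallaiEdmonds G S := by
  obtain ⟨S, ⟨hmax, hgood⟩, hmin⟩ := Set.exists_min_image
    {S | (∀ S', df G S' ≤ df G S) ∧ HasGoodComponents G S} Set.ncard (Set.toFinite _)
    (exists_df_max_hasGoodComponents G)
  refine ⟨S, fun c => hgood.1 _ ⟨c, rfl⟩, fun c => hgood.2 _ ⟨c, rfl⟩, fun T hTS hT => ?_⟩
  rw [ncard_minorNbhd]
  exact ncard_add_one_le_ncard_oddNbhd hmax hgood (fun S' h₁ h₂ => hmin S' ⟨h₁, h₂⟩) hTS hT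
end

section
/- If S is a Gallai-Edmonds set of a finite graph G, then S is Tutte-Berge: some matching of G leaves exactly od(S) - |S| vertices exposed, and hence every such matching is maximum. -/
open SimpleGraph Set

variable {V : Type*} [Fintype V] [DecidableEq V]

/-!
Every matching `M` exposes at least `od(S) - |S|` vertices: an odd `S`-component cannot be
perfectly matched inside itself, so it contains an `M`-exposed vertex or sends an `M`-edge into
`S`, and distinct odd components use distinct exposed vertices or distinct vertices of `S`.

Conversely, Hall's condition in `⟨G,S⟩` matches each `s ∈ S` to a neighbour `w s` in its own
odd component. Adding a perfect matching of that component minus `w s` (factor-criticality), a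
near-perfect matching of every other odd component and a perfect matching of every even one
leaves one exposed vertex in each of the `od(S) - |S|` unused odd components.

As `|exposed M| = |V| - 2 |M|`, a matching exposing the fewest vertices is maximum.
-/

section
omit [Fintype V] [DecidableEq V]
variable {G : SimpleGraph V} {B S : Set V} {M : Subgraph G}

lemma Function.Injective.exists_extend_mem {ι κ α : Type*} {f : ι → κ}
    (hf : Function.Injective f) {p : κ → Set α} (hp : ∀ k, (p k).Nonempty) {w : ι → α}
    (hw : ∀ i, w i ∈ p (f i)) : ∃ g : κ → α, (∀ i, g (f i) = w i) ∧ ∀ k, g k ∈ p k := by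
  refine ⟨Function.extend f w fun k => (hp k).some, hf.extend_apply _ _, fun k => ?_⟩
  by_cases hk : ∃ i, f i = k
  · obtain ⟨i, rfl⟩ := hk
    exact (hf.extend_apply _ _ i).symm ▸ hw i
  · exact (Function.extend_apply' _ _ _ hk).symm ▸ (hp k).some_mem

lemma HasPM.exists_isMatching_verts_eq {A : Set V} (h : HasPM G A) :
    ∃ M : Subgraph G, M.IsMatching ∧ M.verts = A := by
  obtain ⟨M, hM⟩ := h
  refine ⟨M.map (Embedding.induce A).toHom, hM.1.map _ Subtype.val_injective, ?_⟩
  rw [Subgraph.map_verts, Set.eq_univ_of_forall hM.2, Set.image_univ]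
  exact Subtype.range_coe

lemma SimpleGraph.Subgraph.IsMatching.ncard_verts [Finite V] (hM : M.IsMatching) :
    M.verts.ncard = 2 * M.edgeSet.ncard := by
  classical
  have := Fintype.ofFinite V
  rw [Subgraph.isMatching_iff_forall_degree] at hM
  rw [← M.image_coe_edgeSet_coe, Set.ncard_image_of_injective _
    (Sym2.map.injective Subtype.val_injective), ← coe_edgeFinset, Set.ncard_coe_finset,
    ← M.coe.sum_degrees_eq_twice_card_edges, ← Nat.card_coe_set_eq, Nat.card_eq_fintype_card]
  simp only [Subgraph.coe_degree]
  rw [Finset.sum_congr rfl fun (v : M.verts) _ => by convert hM v v.2]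
  simp

lemma SimpleGraph.Subgraph.IsMatching.ncard_exposed_add_ncard_verts [Finite V] (hM : M.IsMatching) :
    (exposed G M).ncard + M.verts.ncard = Nat.card V := by
  rw [← hM.support_eq_verts, add_comm, ← Set.ncard_add_ncard_compl]
  rfl

lemma mem_compSupp {c : (G.induce B).ConnectedComponent} {v : V} :
    v ∈ compSupp G B c ↔ ∃ hv : v ∈ B, (G.induce B).connectedComponentMk ⟨v, hv⟩ = c :=
  ⟨fun ⟨u, hu, hv⟩ => hv ▸ ⟨u.2, hu⟩, fun ⟨hv, hc⟩ => ⟨⟨v, hv⟩, hc, rfl⟩⟩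

lemma mem_compSupp_connectedComponentMk {v : V} (hv : v ∈ B) :
    v ∈ compSupp G B ((G.induce B).connectedComponentMk ⟨v, hv⟩) :=
  mem_compSupp.mpr ⟨hv, rfl⟩

lemma compSupp_subset (c : (G.induce B).ConnectedComponent) : compSupp G B c ⊆ B := by
  rintro v ⟨u, -, rfl⟩
  exact u.2

lemma compSupp_nonempty (c : (G.induce B).ConnectedComponent) : (compSupp G B c).Nonempty := by
  obtain ⟨u, rfl⟩ := c.exists_rep
  exact ⟨u, mem_compSupp_connectedComponentMk u.2⟩

lemma eq_of_mem_compSupp {c d : (G.induce B).ConnectedComponent} {v : V}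
    (hc : v ∈ compSupp G B c) (hd : v ∈ compSupp G B d) : c = d := by
  obtain ⟨hv, rfl⟩ := mem_compSupp.mp hc
  obtain ⟨hv', rfl⟩ := mem_compSupp.mp hd
  rfl

lemma mem_compSupp_of_adj {c : (G.induce B).ConnectedComponent} {v w : V}
    (hv : v ∈ compSupp G B c) (hw : w ∈ B) (hadj : G.Adj v w) : w ∈ compSupp G B c := by
  obtain ⟨hvB, rfl⟩ := mem_compSupp.mp hv
  refine mem_compSupp.mpr ⟨hw, ConnectedComponent.sound ?_⟩
  exact Adj.reachable (G := G.induce B) (u := ⟨w, hw⟩) (v := ⟨v, hvB⟩) hadj.symm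

lemma exists_exposed_or_adj_of_odd [Finite V] (hM : M.IsMatching)
    {c : (G.induce Sᶜ).ConnectedComponent} (hodd : Odd (compSupp G Sᶜ c).ncard) :
    ∃ x, (x ∈ exposed G M ∧ x ∈ compSupp G Sᶜ c) ∨
      (x ∈ S ∧ ∃ v ∈ compSupp G Sᶜ c, M.Adj v x) := by
  by_contra! hcon
  have hind : (M.induce (compSupp G Sᶜ c)).IsMatching := by
    intro v (hv : v ∈ compSupp G Sᶜ c)
    have hvM : v ∈ M.verts := M.support_subset_verts (not_not.mp fun h => (hcon v).1 h hv)
    obtain ⟨w, hvw, huniq⟩ := hM hvM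
    have hw : w ∈ compSupp G Sᶜ c :=
      mem_compSupp_of_adj hv (fun hwS => (hcon w).2 hwS v hv hvw) (M.adj_sub hvw)
    exact ⟨w, ⟨hv, hw, hvw⟩, fun y hy => huniq y hy.2.2⟩
  rw [← Nat.not_even_iff_odd] at hodd
  have hcard := hind.ncard_verts
  rw [Subgraph.induce_verts] at hcard
  exact hodd (hcard ▸ even_two_mul _)

lemma oddComps_le_ncard_exposed_add_ncard [Finite V] (hM : M.IsMatching) :
    oddComps G Sᶜ ≤ (exposed G M).ncard + S.ncard := by
  choose g hg using fun c : {c // Odd (compSupp G Sᶜ c).ncard} =>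
    exists_exposed_or_adj_of_odd hM c.2
  have hg_mem : ∀ c, g c ∈ exposed G M ∪ S := fun c => (hg c).imp And.left And.left
  have hg_inj : Function.Injective g := by
    rintro c d hcd
    refine Subtype.ext ?_
    rcases hg c with ⟨-, hc⟩ | ⟨hcS, v, hv, hvc⟩ <;>
      rcases hg d with ⟨-, hd⟩ | ⟨hdS, u, hu, hud⟩
    · exact eq_of_mem_compSupp hc (hcd ▸ hd)
    · exact absurd hdS (compSupp_subset (c : (G.induce Sᶜ).ConnectedComponent) (hcd ▸ hc))
    · exact absurd hcS (compSupp_subset (d : (G.induce Sᶜ).ConnectedComponent) (hcd ▸ hd))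
    · exact eq_of_mem_compSupp hv (hM.eq_of_adj_right hvc (hcd ▸ hud) ▸ hu)
  calc oddComps G Sᶜ = Nat.card {c // Odd (compSupp G Sᶜ c).ncard} := (Nat.card_coe_set_eq _).symm
    _ ≤ Nat.card (exposed G M ∪ S : Set V) :=
        Nat.card_le_card_of_injective (fun c => ⟨g c, hg_mem c⟩)
          fun c d hcd => hg_inj (congrArg Subtype.val hcd)
    _ = (exposed G M ∪ S).ncard := Nat.card_coe_set_eq _
    _ ≤ _ := Set.ncard_union_le _ _

lemma df_le_ncard_exposed [Finite V] (hM : M.IsMatching) : df G S ≤ (exposed G M).ncard := by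
  have := oddComps_le_ncard_exposed_add_ncard (S := S) hM
  unfold df
  omega

lemma isMaximumMatching_of_forall_ncard_exposed_le [Finite V] (hM : M.IsMatching)
    (hmin : ∀ M' : Subgraph G, M'.IsMatching → (exposed G M).ncard ≤ (exposed G M').ncard) :
    IsMaximumMatching G M := by
  refine ⟨hM, fun M' hM' => ?_⟩
  have := hmin M' hM'
  have := hM.ncard_exposed_add_ncard_verts
  have := hM'.ncard_exposed_add_ncard_verts
  have := hM.ncard_verts
  have := hM'.ncard_verts
  omega

lemma mem_minorNbhd_singleton {c : (G.induce Sᶜ).ConnectedComponent} {u : V} :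
    c ∈ minorNbhd G S {u} ↔
      Odd (compSupp G Sᶜ c).ncard ∧ ∃ w ∈ compSupp G Sᶜ c, G.Adj u w := by
  simp [minorNbhd]

lemma GallaiEdmonds.ncard_le_ncard_minorNbhd (h : GallaiEdmonds G S) {T : Set V} (hT : T ⊆ S) :
    T.ncard ≤ (minorNbhd G S T).ncard := by
  rcases T.eq_empty_or_nonempty with rfl | hne
  · simp
  · exact (Nat.le_succ _).trans (h.2.2 T hT hne)

lemma exists_injective_mem_minorNbhd [Finite V]
    (hHall : ∀ T ⊆ S, T.ncard ≤ (minorNbhd G S T).ncard) :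
    ∃ f : S → (G.induce Sᶜ).ConnectedComponent,
      Function.Injective f ∧ ∀ s : S, f s ∈ minorNbhd G S {(s : V)} := by
  classical
  have := Fintype.ofFinite (G.induce Sᶜ).ConnectedComponent
  refine (Fintype.all_card_le_filter_rel_iff_exists_injective
    fun (s : S) c => c ∈ minorNbhd G S {(s : V)}).mp fun A => ?_
  have hA : ((Finset.univ.filter fun c => ∃ s ∈ A, c ∈ minorNbhd G S {(s : V)} : Finset _) :
      Set (G.induce Sᶜ).ConnectedComponent) = minorNbhd G S (Subtype.val '' (A : Set S)) := by
    ext c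
    simp [minorNbhd, and_left_comm]
  calc A.card = (Subtype.val '' (A : Set S)).ncard := by
        rw [Set.ncard_image_of_injective _ Subtype.val_injective, Set.ncard_coe_finset]
    _ ≤ (minorNbhd G S (Subtype.val '' (A : Set S))).ncard :=
        hHall _ (Subtype.coe_image_subset _ _)
    _ = _ := by rw [← hA, Set.ncard_coe_finset]

lemma GallaiEdmonds.exists_isMatching_verts_eq (h : GallaiEdmonds G S)
    {c : (G.induce Sᶜ).ConnectedComponent} {x : V} (hx : x ∈ compSupp G Sᶜ c) :
    ∃ N : Subgraph G, N.IsMatching ∧ N.verts =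
      if Odd (compSupp G Sᶜ c).ncard then compSupp G Sᶜ c \ {x} else compSupp G Sᶜ c := by
  split_ifs with hodd
  · exact (h.2.1 c hodd x hx).exists_isMatching_verts_eq
  · exact (h.1 c (Nat.not_odd_iff_even.mp hodd)).exists_isMatching_verts_eq

lemma isMatching_iSup_of_pairwise_disjoint_verts {ι : Type*} {N : ι → Subgraph G}
    (hN : ∀ i, (N i).IsMatching) (hd : Pairwise fun i j => Disjoint (N i).verts (N j).verts) :
    (⨆ i, N i).IsMatching :=
  .iSup hN fun i j hij => by
    simpa only [(hN i).support_eq_verts, (hN j).support_eq_verts] using hd hij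

lemma isMatching_iSup_of_verts_subset_compSupp {N : (G.induce B).ConnectedComponent → Subgraph G}
    (hN : ∀ c, (N c).IsMatching) (hNsub : ∀ c, (N c).verts ⊆ compSupp G B c) :
    (⨆ c, N c).IsMatching :=
  isMatching_iSup_of_pairwise_disjoint_verts hN fun c d hcd =>
    Set.disjoint_left.mpr fun _ hc hd => hcd (eq_of_mem_compSupp (hNsub c hc) (hNsub d hd))

lemma isMatching_iSup_subgraphOfAdj {f : S → (G.induce Sᶜ).ConnectedComponent}
    (hf : Function.Injective f) {w : S → V} (hw : ∀ s, w s ∈ compSupp G Sᶜ (f s))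
    (hadj : ∀ s : S, G.Adj s (w s)) : (⨆ s, G.subgraphOfAdj (hadj s)).IsMatching := by
  refine isMatching_iSup_of_pairwise_disjoint_verts (fun s => .subgraphOfAdj _)
    fun s t hst => ?_
  have hwS s : w s ∉ S := compSupp_subset _ (hw s)
  have hts : (t : V) ≠ s := Subtype.val_injective.ne hst.symm
  have htw : (t : V) ≠ w s := fun he => hwS s (he ▸ t.2)
  have hws : w t ≠ s := fun he => hwS t (he ▸ s.2)
  have hww : w t ≠ w s := fun he => hst (hf (eq_of_mem_compSupp (hw s) (he ▸ hw t)))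
  simpa [subgraphOfAdj_verts] using ⟨⟨hts, htw⟩, hws, hww⟩

lemma GallaiEdmonds.exists_isMatching_exposed_subset_image [Finite V] (h : GallaiEdmonds G S)
    {f : S → (G.induce Sᶜ).ConnectedComponent} (hf : Function.Injective f)
    (hfS : ∀ s : S, f s ∈ minorNbhd G S {(s : V)}) :
    ∃ M : Subgraph G, M.IsMatching ∧ ∃ g : (G.induce Sᶜ).ConnectedComponent → V,
      exposed G M ⊆ g '' ({c | Odd (compSupp G Sᶜ c).ncard} \ Set.range f) := by
  have hfodd s : Odd (compSupp G Sᶜ (f s)).ncard := (mem_minorNbhd_singleton.mp (hfS s)).1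
  choose w hw hadj using fun s : S => (mem_minorNbhd_singleton.mp (hfS s)).2
  -- `hole c` is the vertex of `c` left uncovered by its own matching: `w s` when `c = f s`.
  obtain ⟨hole, hhole_f, hhole⟩ :=
    hf.exists_extend_mem (fun c => compSupp_nonempty (G := G) (B := Sᶜ) c) hw
  choose N hN hNverts using fun c => h.exists_isMatching_verts_eq (hhole c)
  have hNsub : ∀ c, (N c).verts ⊆ compSupp G Sᶜ c := fun c => by
    rw [hNverts c]
    split_ifs
    exacts [Set.sdiff_subset, subset_rfl]
  have hE := isMatching_iSup_subgraphOfAdj hf hw hadj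
  have hNs := isMatching_iSup_of_verts_subset_compSupp hN hNsub
  have hdisj : Disjoint (⨆ s, G.subgraphOfAdj (hadj s)).support (⨆ c, N c).support := by
    rw [hE.support_eq_verts, hNs.support_eq_verts, Subgraph.verts_iSup, Subgraph.verts_iSup]
    simp only [Set.disjoint_iUnion_left, Set.disjoint_iUnion_right, subgraphOfAdj_verts]
    intro c s
    refine Set.disjoint_insert_left.mpr ⟨fun hs => compSupp_subset c (hNsub c hs) s.2,
      Set.disjoint_singleton_left.mpr fun hwc => ?_⟩
    obtain rfl : f s = c := eq_of_mem_compSupp (hw s) (hNsub c hwc)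
    rw [hNverts, if_pos (hfodd s), hhole_f] at hwc
    exact hwc.2 rfl
  have hM := hE.sup hNs hdisj
  refine ⟨_, hM, hole, fun v hv => ?_⟩
  rw [exposed, Set.mem_ofPred_eq, hM.support_eq_verts] at hv
  simp only [Subgraph.verts_sup, Subgraph.verts_iSup, subgraphOfAdj_verts, Set.mem_union,
    Set.mem_iUnion, Set.mem_insert_iff, Set.mem_singleton_iff, not_or, not_exists] at hv
  obtain ⟨hvE, hvN⟩ := hv
  have hvS : v ∉ S := fun hvS => (hvE ⟨v, hvS⟩).1 rfl
  set c := (G.induce Sᶜ).connectedComponentMk ⟨v, hvS⟩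
  have hvc : v ∈ compSupp G Sᶜ c := mem_compSupp_connectedComponentMk hvS
  have hodd_hole : Odd (compSupp G Sᶜ c).ncard ∧ v = hole c := by
    have := hvN c
    rw [hNverts c] at this
    split_ifs at this with hodd
    · exact ⟨hodd, by simpa [hvc] using this⟩
    · exact absurd hvc this
  refine ⟨c, ⟨hodd_hole.1, ?_⟩, hodd_hole.2.symm⟩
  rintro ⟨s, hs⟩
  exact (hvE s).2 (hodd_hole.2.trans (hs ▸ hhole_f s))

lemma GallaiEdmonds.exists_isMatching_ncard_exposed_add_le [Finite V] (h : GallaiEdmonds G S) :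
    ∃ M : Subgraph G, M.IsMatching ∧ (exposed G M).ncard + S.ncard ≤ oddComps G Sᶜ := by
  obtain ⟨f, hf, hfS⟩ :=
    exists_injective_mem_minorNbhd fun T hT => h.ncard_le_ncard_minorNbhd hT
  obtain ⟨M, hM, g, hexp⟩ := h.exists_isMatching_exposed_subset_image hf hfS
  have hrange : Set.range f ⊆ {c | Odd (compSupp G Sᶜ c).ncard} :=
    Set.range_subset_iff.mpr fun s => (mem_minorNbhd_singleton.mp (hfS s)).1
  refine ⟨M, hM, ?_⟩
  calc (exposed G M).ncard + S.ncard
      ≤ ({c | Odd (compSupp G Sᶜ c).ncard} \ Set.range f).ncard + (Set.range f).ncard := by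
        rw [Set.ncard_range_of_injective hf, Nat.card_coe_set_eq]
        exact Nat.add_le_add_right ((Set.ncard_le_ncard hexp).trans Set.ncard_image_le) _
    _ = oddComps G Sᶜ := Set.ncard_sdiff_add_ncard_of_subset hrange

end

/-- A Gallai-Edmonds set `S` is Tutte-Berge: some matching leaves exactly
`od(S) - |S|` vertices exposed, and every such matching is maximum. -/
theorem stmt_8 (G : SimpleGraph V) (S : Set V) (h : GallaiEdmonds G S) :
    (∃ M : Subgraph G, M.IsMatching ∧ ((exposed G M).ncard : ℤ) = df G S) ∧
    (∀ M : Subgraph G, M.IsMatching → ((exposed G M).ncard : ℤ) = df G S →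
      IsMaximumMatching G M) := by
  obtain ⟨M, hM, hle⟩ := h.exists_isMatching_ncard_exposed_add_le
  refine ⟨⟨M, hM, le_antisymm ?_ (df_le_ncard_exposed hM)⟩, fun M hM hexp => ?_⟩
  · unfold df
    omega
  · refine isMaximumMatching_of_forall_ncard_exposed_le hM fun M' hM' => ?_
    exact_mod_cast hexp ▸ df_le_ncard_exposed hM'
end
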